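/- Let g(x) = 1/(1+x) − 1/(2+x) + 1/(3−x). Then for all x ∈ (0,1): g(V₁x)·|V₁'(x)| + g(V₂x)·|V₂'(x)| + g(V₃x)·|V₃'(x)| + g(V₄x)·|V₄'(x)| = g(x), where V₁x = (3+6x)/(11+7x), V₂x = 3x/(15−4x), V₃x = (4+5x)/(5+4x), V₄x = (3+x)/(6−x). -/

import Mathlib

/-!
Each inverse branch is a Möbius map `V x = (a x + b) / (c x + d)` with `V' = (a d - b c) / (c x + d)²`,
so `V' / (k + V)` is the logarithmic derivative of `((a + k c) x + (b + k d)) / (c x + d)`, i.e. the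
difference of two simple fractions. Hence each term `g (V x) |V' x|` is a sum of four simple
fractions, and the sixteen fractions cancel down to `g x`: those of `V₁` and `V₃` leave
`1/(1+x) - 1/(2+x)`, those of `V₂` and `V₄` leave `1/(3-x)`.
-/

theorem hasDerivAt_div_linear (a b c d x : ℝ) (hx : c * x + d ≠ 0) :
    HasDerivAt (fun y => (a * y + b) / (c * y + d)) ((a * d - b * c) / (c * x + d) ^ 2) x :=
  ((((hasDerivAt_id x).const_mul a).add_const b).div
    (((hasDerivAt_id x).const_mul c).add_const d) hx).congr_deriv (by simp only [id]; ring)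

theorem abs_deriv_div_linear {f : ℝ → ℝ} {a b c d x : ℝ}
    (hf : ∀ y, f y = (a * y + b) / (c * y + d)) (hx : c * x + d ≠ 0) (had : 0 ≤ a * d - b * c) :
    |deriv f x| = (a * d - b * c) / (c * x + d) ^ 2 := by
  rw [funext hf, (hasDerivAt_div_linear a b c d x hx).deriv]
  exact abs_of_nonneg (by positivity)

theorem one_div_add_div_linear (k a b c d x : ℝ) (hx : c * x + d ≠ 0) :
    1 / (k + (a * x + b) / (c * x + d)) = (c * x + d) / ((a + k * c) * x + (b + k * d)) := by
  rw [add_div' _ _ _ hx, one_div_div]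
  ring

theorem one_div_add_div_linear_mul_deriv (k a b c d x : ℝ) (hx : c * x + d ≠ 0)
    (hk : (a + k * c) * x + (b + k * d) ≠ 0) :
    1 / (k + (a * x + b) / (c * x + d)) * ((a * d - b * c) / (c * x + d) ^ 2) =
      (a + k * c) / ((a + k * c) * x + (b + k * d)) - c / (c * x + d) := by
  rw [one_div_add_div_linear k a b c d x hx, div_sub_div _ _ hk hx, div_mul_div_comm,
    div_eq_div_iff (mul_ne_zero hk (pow_ne_zero 2 hx)) (mul_ne_zero hk hx)]
  ring

theorem div_mul_add_eq_inv_add_div {e : ℝ} (f x : ℝ) (he : e ≠ 0) :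
    e / (e * x + f) = (x + f / e)⁻¹ := by
  rw [← div_mul_cancel_left₀ he, mul_add, mul_div_cancel₀ f he]

noncomputable def kuzminDensity (x : ℝ) : ℝ := 1 / (1 + x) - 1 / (2 + x) + 1 / (3 - x)

theorem kuzminDensity_div_linear_mul_deriv (a b c d x : ℝ) (hx : c * x + d ≠ 0)
    (h₁ : (a + c) * x + (b + d) ≠ 0) (h₂ : (a + 2 * c) * x + (b + 2 * d) ≠ 0)
    (h₃ : (a - 3 * c) * x + (b - 3 * d) ≠ 0) :
    kuzminDensity ((a * x + b) / (c * x + d)) * ((a * d - b * c) / (c * x + d) ^ 2) =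
      (a + c) / ((a + c) * x + (b + d)) - (a + 2 * c) / ((a + 2 * c) * x + (b + 2 * d))
        - (a - 3 * c) / ((a - 3 * c) * x + (b - 3 * d)) + c / (c * x + d) := by
  have e₁ := one_div_add_div_linear_mul_deriv 1 a b c d x hx (by simpa using h₁)
  have e₂ := one_div_add_div_linear_mul_deriv 2 a b c d x hx h₂
  have e₃ := one_div_add_div_linear_mul_deriv (-3) a b c d x hx (by convert h₃ using 2 <;> ring)
  have three_sub : 1 / (3 - (a * x + b) / (c * x + d)) =
      -(1 / (-3 + (a * x + b) / (c * x + d))) := by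
    rw [← one_div_neg_eq_neg_one_div]
    ring
  rw [kuzminDensity, three_sub]
  linear_combination e₁ - e₂ - e₃

theorem stmt_16
    (g : ℝ → ℝ) (hg : ∀ x, g x = 1/(1+x) - 1/(2+x) + 1/(3-x))
    (V1 V2 V3 V4 : ℝ → ℝ)
    (hV1 : ∀ x, V1 x = (3+6*x)/(11+7*x))
    (hV2 : ∀ x, V2 x = 3*x/(15-4*x))
    (hV3 : ∀ x, V3 x = (4+5*x)/(5+4*x))
    (hV4 : ∀ x, V4 x = (3+x)/(6-x)) :
    ∀ x ∈ Set.Ioo (0:ℝ) 1,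
      g (V1 x) * |deriv V1 x| + g (V2 x) * |deriv V2 x| +
      g (V3 x) * |deriv V3 x| + g (V4 x) * |deriv V4 x| = g x := by
  rintro x ⟨hx0, hx1⟩
  obtain rfl : g = kuzminDensity := funext hg
  have hV1' (y : ℝ) : V1 y = (6 * y + 3) / (7 * y + 11) := by rw [hV1]; ring
  have hV2' (y : ℝ) : V2 y = (3 * y + 0) / (-4 * y + 15) := by rw [hV2]; ring
  have hV3' (y : ℝ) : V3 y = (5 * y + 4) / (4 * y + 5) := by rw [hV3]; ring
  have hV4' (y : ℝ) : V4 y = (1 * y + 3) / (-1 * y + 6) := by rw [hV4]; ring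
  rw [abs_deriv_div_linear hV1' (by linarith) (by norm_num), hV1',
    abs_deriv_div_linear hV2' (by linarith) (by norm_num), hV2',
    abs_deriv_div_linear hV3' (by linarith) (by norm_num), hV3',
    abs_deriv_div_linear hV4' (by linarith) (by norm_num), hV4']
  repeat rw [kuzminDensity_div_linear_mul_deriv _ _ _ _ _ (by linarith) (by linarith)
    (by linarith) (by linarith)]
  -- Rescaling every fraction `e / (e x + f)` to `(x + f/e)⁻¹` lets `ring` see the cancellations.
  norm_num [↓div_mul_add_eq_inv_add_div, kuzminDensity]
  rw [← neg_sub x 3, inv_neg]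
  ring
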